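/- arXiv:2510.04244 — 5 statements merged into one kernel-verified Lean document; each statement's English description precedes it below -/
import Mathlib

section
/- The map φ defined on cosets by φ(s_C·S_n) = Σ_{D ⊆ {1,…,n}} (-1)^{|C∩D|} D is an isomorphism of B_n-representations from the coset representation ℝ[B_n/S_n] to the direct sum ⊕_{i=0}^{n} V_n^i. -/
/-! The map φ is the Walsh–Hadamard transform `f ↦ ∑_C f(C) χ_C` with `χ_C(D) = (-1)^|C ∩ D|`.
By orthogonality of the characters `χ_C` of `((C₂)ⁿ, ∆)` it squares to `2ⁿ`, hence is invertible.
Since `Bₙ` is generated by the `s_A` and the permutations, equivariance only has to be checked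
for these on basis vectors, where it is the multiplicativity `χ_{A ∆ C} = χ_A χ_C` and the
identity `χ_{π(C)}(D) = χ_C(π⁻¹(D))`. -/

abbrev Nn (n : ℕ) : Type := Multiplicative (Fin n → ZMod 2)

def permAddEquiv {n : ℕ} (π : Equiv.Perm (Fin n)) : (Fin n → ZMod 2) ≃+ (Fin n → ZMod 2) where
  toFun f := f ∘ π.symm
  invFun f := f ∘ π
  left_inv f := by funext i; simp
  right_inv f := by funext i; simp
  map_add' f g := rfl

/-- `Sₙ` acting on `(C₂)ⁿ` by permuting coordinates. -/
def permAut (n : ℕ) : Equiv.Perm (Fin n) →* MulAut (Nn n) where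
  toFun π := AddEquiv.toMultiplicative (permAddEquiv π)
  map_one' := by ext f; rfl
  map_mul' π ρ := by ext f; rfl

/-- The hyperoctahedral group `Bₙ = (C₂)ⁿ ⋊ Sₙ`. -/
abbrev Bn (n : ℕ) : Type := SemidirectProduct (Nn n) (Equiv.Perm (Fin n)) (permAut n)

/-- the diagonal element `s_A`, with `-1` exactly at positions in `A`. -/
def sgn {n : ℕ} (A : Finset (Fin n)) : Nn n :=
  Multiplicative.ofAdd (fun i => if i ∈ A then (1 : ZMod 2) else 0)

open Finset

section Walsh

variable {α : Type*} [DecidableEq α]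

noncomputable def walsh (C D : Finset α) : ℝ := (-1) ^ #(C ∩ D)

lemma walsh_comm (C D : Finset α) : walsh C D = walsh D C := by
  rw [walsh, walsh, inter_comm]

lemma walsh_eq_prod (C D : Finset α) : walsh C D = ∏ i ∈ D, if i ∈ C then -1 else 1 := by
  rw [prod_ite_mem, prod_const, inter_comm, walsh]

lemma walsh_symmDiff_left (A B D : Finset α) :
    walsh (symmDiff A B) D = walsh A D * walsh B D := by
  simp only [walsh_eq_prod, ← prod_mul_distrib]
  refine prod_congr rfl fun i _ => ?_
  by_cases hA : i ∈ A <;> by_cases hB : i ∈ B <;> simp [mem_symmDiff, hA, hB]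

lemma walsh_symmDiff_right (C A B : Finset α) :
    walsh C (symmDiff A B) = walsh C A * walsh C B := by
  simp only [walsh_comm C, walsh_symmDiff_left]

lemma walsh_image (π : Equiv.Perm α) (C D : Finset α) :
    walsh (C.image π) D = walsh C (D.image π.symm) := by
  rw [walsh, walsh, ← card_image_of_injective (C ∩ _) π.injective, image_inter _ _ π.injective,
    image_image, Equiv.self_comp_symm, image_id]

variable [Fintype α]

lemma sum_walsh (S : Finset α) :
    ∑ C, walsh C S = if S = ∅ then 2 ^ Fintype.card α else 0 := by
  split_ifs with hS
  · simp [hS, walsh, Fintype.card_finset]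
  obtain ⟨a, ha⟩ := nonempty_iff_ne_empty.2 hS
  have hwalsh_a : walsh {a} S = -1 := by simp [walsh, singleton_inter_of_mem ha]
  have hflip : ∑ C, walsh C S = -∑ C, walsh C S := by
    calc ∑ C, walsh C S = ∑ C, walsh (symmDiff {a} C) S :=
          (Equiv.sum_comp ((symmDiff_right_involutive ({a} : Finset α)).toPerm _) (walsh · S)).symm
      _ = -∑ C, walsh C S := by
          simp [walsh_symmDiff_left, hwalsh_a]
  linarith

noncomputable def walshTransform : (Finset α → ℝ) →ₗ[ℝ] (Finset α → ℝ) :=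
  Fintype.linearCombination ℝ walsh

lemma walshTransform_single (C : Finset α) : walshTransform (Pi.single C 1) = walsh C := by
  rw [walshTransform, Fintype.linearCombination_apply_single, one_smul]

lemma walshTransform_comp_self :
    walshTransform ∘ₗ walshTransform =
      (2 ^ Fintype.card α : ℝ) • (LinearMap.id : (Finset α → ℝ) →ₗ[ℝ] _) := by
  refine (Pi.basisFun ℝ _).ext fun E => funext fun D => ?_
  simp only [Pi.basisFun_apply, LinearMap.comp_apply, walshTransform_single]
  rw [walshTransform, Fintype.linearCombination_apply]
  calc (∑ C, walsh E C • walsh C) D = ∑ C, walsh C (symmDiff E D) := by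
        simp only [Finset.sum_apply, Pi.smul_apply, smul_eq_mul, walsh_comm E,
          walsh_symmDiff_right]
    _ = _ := by
        simp [sum_walsh, Pi.single_apply, eq_comm]

lemma walshTransform_injective : Function.Injective (walshTransform (α := α)) := by
  intro f g hfg
  have hscaled : (2 ^ Fintype.card α : ℝ) • f = (2 ^ Fintype.card α : ℝ) • g := by
    simpa only [← LinearMap.comp_apply, walshTransform_comp_self, LinearMap.smul_apply,
      LinearMap.id_apply] using congr(walshTransform $hfg)
  exact smul_right_injective _ (by positivity) hscaled

end Walsh

lemma sgn_surjective {n : ℕ} : Function.Surjective (sgn : Finset (Fin n) → Nn n) := by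
  have hZMod2 : ∀ x : ZMod 2, (if x = 1 then 1 else 0) = x := by decide
  intro a
  refine ⟨univ.filter fun i => a.toAdd i = 1, congrArg Multiplicative.ofAdd (funext fun i => ?_)⟩
  simp only [mem_filter, mem_univ, true_and]
  exact hZMod2 (a.toAdd i)

section Hyperoctahedral

variable {n : ℕ} (ρV : Representation ℝ (Bn n) (Finset (Fin n) → ℝ))

lemma representation_inl_sgn_eq_mulLeft
    (h : ∀ A D : Finset (Fin n), ρV (.inl (sgn A)) (Pi.single D 1) =
      (-1 : ℝ) ^ #(A ∩ D) • Pi.single D 1) (A : Finset (Fin n)) :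
    ρV (.inl (sgn A)) = LinearMap.mulLeft ℝ (walsh A) := by
  refine (Pi.basisFun ℝ _).ext fun D => ?_
  rw [Pi.basisFun_apply, h, LinearMap.mulLeft_apply]
  funext E
  by_cases hE : E = D
  · subst hE; simp [walsh]
  · simp [hE]

lemma representation_inr_eq_funLeft
    (h : ∀ (π : Equiv.Perm (Fin n)) (D : Finset (Fin n)), ρV (.inr π) (Pi.single D 1) =
      Pi.single (D.image π) 1) (π : Equiv.Perm (Fin n)) :
    ρV (.inr π) = LinearMap.funLeft ℝ ℝ (Finset.image π.symm) := by
  refine (Pi.basisFun ℝ _).ext fun D => ?_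
  rw [Pi.basisFun_apply, h]
  funext E
  have hE : E = D.image π ↔ E.image π.symm = D := by
    constructor <;> rintro rfl <;> simp [image_image]
  simp only [LinearMap.funLeft_apply, Pi.single_apply, hE]

lemma walshTransform_comp_inl_sgn (ρW : Representation ℝ (Bn n) (Finset (Fin n) → ℝ))
    (hW : ∀ A C : Finset (Fin n), ρW (.inl (sgn A)) (Pi.single C 1) = Pi.single (symmDiff A C) 1)
    (hV : ∀ A D : Finset (Fin n), ρV (.inl (sgn A)) (Pi.single D 1) =
      (-1 : ℝ) ^ #(A ∩ D) • Pi.single D 1) (A : Finset (Fin n)) :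
    walshTransform ∘ₗ ρW (.inl (sgn A)) = ρV (.inl (sgn A)) ∘ₗ walshTransform := by
  refine (Pi.basisFun ℝ _).ext fun C => funext fun D => ?_
  simp only [Pi.basisFun_apply, LinearMap.comp_apply, hW, walshTransform_single,
    representation_inl_sgn_eq_mulLeft ρV hV, LinearMap.mulLeft_apply, Pi.mul_apply,
    walsh_symmDiff_left]

lemma walshTransform_comp_inr (ρW : Representation ℝ (Bn n) (Finset (Fin n) → ℝ))
    (hW : ∀ (π : Equiv.Perm (Fin n)) (C : Finset (Fin n)), ρW (.inr π) (Pi.single C 1) =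
      Pi.single (C.image π) 1)
    (hV : ∀ (π : Equiv.Perm (Fin n)) (D : Finset (Fin n)), ρV (.inr π) (Pi.single D 1) =
      Pi.single (D.image π) 1) (π : Equiv.Perm (Fin n)) :
    walshTransform ∘ₗ ρW (.inr π) = ρV (.inr π) ∘ₗ walshTransform := by
  refine (Pi.basisFun ℝ _).ext fun C => funext fun D => ?_
  simp only [Pi.basisFun_apply, LinearMap.comp_apply, hW, walshTransform_single,
    representation_inr_eq_funLeft ρV hV, LinearMap.funLeft_apply, walsh_image]

lemma walshTransform_comp_representation (ρW : Representation ℝ (Bn n) (Finset (Fin n) → ℝ))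
    (hWperm : ∀ (π : Equiv.Perm (Fin n)) (C : Finset (Fin n)), ρW (.inr π) (Pi.single C 1) =
      Pi.single (C.image π) 1)
    (hWsgn : ∀ A C : Finset (Fin n), ρW (.inl (sgn A)) (Pi.single C 1) =
      Pi.single (symmDiff A C) 1)
    (hVperm : ∀ (π : Equiv.Perm (Fin n)) (D : Finset (Fin n)), ρV (.inr π) (Pi.single D 1) =
      Pi.single (D.image π) 1)
    (hVsgn : ∀ A D : Finset (Fin n), ρV (.inl (sgn A)) (Pi.single D 1) =
      (-1 : ℝ) ^ #(A ∩ D) • Pi.single D 1) (g : Bn n) :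
    walshTransform ∘ₗ ρW g = ρV g ∘ₗ walshTransform := by
  obtain ⟨A, hA⟩ := sgn_surjective g.left
  rw [← SemidirectProduct.inl_left_mul_inr_right g, ← hA, map_mul, map_mul,
    Module.End.mul_eq_comp, Module.End.mul_eq_comp, ← LinearMap.comp_assoc,
    walshTransform_comp_inl_sgn ρV ρW hWsgn hVsgn, LinearMap.comp_assoc,
    walshTransform_comp_inr ρV ρW hWperm hVperm, LinearMap.comp_assoc]

end Hyperoctahedral

/-- φ(s_C·Sₙ) = Σ_D (-1)^{|C∩D|} D is an isomorphism of Bₙ-representations from the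
coset representation ℝ[Bₙ/Sₙ] (with basis the coset representatives s_C, C ⊆ {1,…,n},
on which s_A acts by s_A·(s_C Sₙ) = s_{A ∆ C} Sₙ and π acts by π·(s_C Sₙ) = s_{π(C)} Sₙ)
to the direct sum ⊕ᵢ Vₙⁱ (with basis all subsets D, graded by |D|, on which π·D = π(D)
and s_A·D = (-1)^{|A∩D|} D). -/
theorem stmt1 (n : ℕ)
    (ρW : Representation ℝ (Bn n) (Finset (Fin n) → ℝ))
    (hWperm : ∀ (π : Equiv.Perm (Fin n)) (C : Finset (Fin n)),
      ρW (SemidirectProduct.inr π) (Pi.single C 1 : Finset (Fin n) → ℝ) =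
        (Pi.single (C.image π) 1 : Finset (Fin n) → ℝ))
    (hWsgn : ∀ (A C : Finset (Fin n)),
      ρW (SemidirectProduct.inl (sgn A)) (Pi.single C 1 : Finset (Fin n) → ℝ) =
        (Pi.single (symmDiff A C) 1 : Finset (Fin n) → ℝ))
    (ρV : Representation ℝ (Bn n) (Finset (Fin n) → ℝ))
    (hVperm : ∀ (π : Equiv.Perm (Fin n)) (D : Finset (Fin n)),
      ρV (SemidirectProduct.inr π) (Pi.single D 1 : Finset (Fin n) → ℝ) =
        (Pi.single (D.image π) 1 : Finset (Fin n) → ℝ))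
    (hVsgn : ∀ (A D : Finset (Fin n)),
      ρV (SemidirectProduct.inl (sgn A)) (Pi.single D 1 : Finset (Fin n) → ℝ) =
        (-1 : ℝ) ^ ((A ∩ D).card) • (Pi.single D 1 : Finset (Fin n) → ℝ)) :
    ∃ φ : (Finset (Fin n) → ℝ) ≃ₗ[ℝ] (Finset (Fin n) → ℝ),
      (∀ C : Finset (Fin n),
        φ (Pi.single C 1 : Finset (Fin n) → ℝ) = fun D => (-1 : ℝ) ^ ((C ∩ D).card)) ∧
      ∀ (g : Bn n) (w : Finset (Fin n) → ℝ), φ (ρW g w) = ρV g (φ w) := by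
  exact ⟨LinearEquiv.ofInjectiveEndo walshTransform walshTransform_injective,
    fun C => walshTransform_single C, fun g =>
      LinearMap.congr_fun (walshTransform_comp_representation ρV ρW hWperm hWsgn hVperm hVsgn g)⟩
end

section
/- Fix 1 ≤ k ≤ n−1, let A = {1,…,k}, B = {1,…,n}, U = {S ⊆ B : |S| odd, |S∩A| even}, and w_N = 4·Σ_{S∈U} s_S. Then the Fourier transform of the Laplacian Δ(w_N) = 4·Σ_{S∈U}(1 − s_S) satisfies: Δ̂(w_N)(S) = 0 if S = A or S = ∅; Δ̂(w_N)(S) = 2·2^n if S = B or S = B∖A; and Δ̂(w_N)(S) = 2^n otherwise. -/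
noncomputable def Fchi {n : ℕ} (X T : Finset (Fin n)) : ℝ :=
  ∏ i ∈ T, (if i ∈ X then (-1 : ℝ) else 1)

lemma Fchi_eq {n : ℕ} (X T : Finset (Fin n)) :
    (-1 : ℝ) ^ ((X ∩ T).card) = Fchi X T := by
  unfold Fchi
  rw [Finset.prod_ite_mem, Finset.prod_const, Finset.inter_comm]

lemma Fchi_mul {n : ℕ} (X Y T : Finset (Fin n)) :
    Fchi X T * Fchi Y T = Fchi (symmDiff X Y) T := by
  unfold Fchi
  rw [← Finset.prod_mul_distrib]
  refine Finset.prod_congr rfl fun i _ => ?_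
  by_cases hx : i ∈ X <;> by_cases hy : i ∈ Y <;>
    simp [Finset.mem_symmDiff, hx, hy]

lemma Fchi_empty {n : ℕ} (T : Finset (Fin n)) : Fchi ∅ T = 1 := by
  simp [Fchi]

lemma Fchi_sum {n : ℕ} (X : Finset (Fin n)) :
    ∑ T : Finset (Fin n), Fchi X T = if X = ∅ then (2:ℝ)^n else 0 := by
  have h : ∑ T : Finset (Fin n), Fchi X T
      = ∏ i : Fin n, ((if i ∈ X then (-1:ℝ) else 1) + 1) := by
    rw [Finset.prod_add]
    simp [Fchi, Finset.powerset_univ]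
  rw [h]
  by_cases hX : X = ∅
  · simp [hX]; norm_num
  · rw [if_neg hX]
    obtain ⟨i, hi⟩ := Finset.nonempty_iff_ne_empty.mpr hX
    exact Finset.prod_eq_zero (Finset.mem_univ i) (by simp [hi])

lemma Fchi_indic {n : ℕ} (A T : Finset (Fin n)) :
    (1 - Fchi Finset.univ T) * (1 + Fchi A T) =
      if Odd T.card ∧ Even ((T ∩ A).card) then 4 else 0 := by
  have h1 : Fchi Finset.univ T = (-1:ℝ)^T.card := by
    rw [← Fchi_eq]; simp
  have h2 : Fchi A T = (-1:ℝ)^((T ∩ A).card) := by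
    rw [← Fchi_eq, Finset.inter_comm]
  rw [h1, h2]
  rcases Nat.even_or_odd T.card with he | he <;>
    rcases Nat.even_or_odd ((T ∩ A).card) with he2 | he2
  · rw [he.neg_one_pow, if_neg (fun h => Nat.not_odd_iff_even.mpr he h.1)]; ring
  · rw [he.neg_one_pow, if_neg (fun h => Nat.not_odd_iff_even.mpr he h.1)]; ring
  · rw [he.neg_one_pow, he2.neg_one_pow, if_pos ⟨he, he2⟩]; ring
  · rw [he.neg_one_pow, he2.neg_one_pow,
      if_neg (fun h => Nat.not_even_iff_odd.mpr he2 h.2)]; ring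

/-- For 1 ≤ k ≤ n−1, A = {1,…,k}, B = {1,…,n}, U = {S : |S| odd, |S∩A| even} and
w_N = 4Σ_{T∈U}s_T, the Fourier transform of Δ(w_N) = 4Σ_{T∈U}(1 − s_T), namely
Δ̂(w_N)(S) = 4Σ_{T∈U}(1 − (−1)^{|S∩T|}), equals 0 at S = A and S = ∅, equals 2·2ⁿ at
S = B and S = B∖A, and equals 2ⁿ otherwise. -/
theorem stmt10 (n k : ℕ) (hk1 : 1 ≤ k) (hkn : k ≤ n - 1)
    (A : Finset (Fin n)) (hA : A = Finset.univ.filter (fun i : Fin n => (i : ℕ) < k))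
    (U : Finset (Finset (Fin n)))
    (hU : U = Finset.univ.filter (fun S : Finset (Fin n) =>
      Odd S.card ∧ Even ((S ∩ A).card)))
    (S : Finset (Fin n)) :
    4 * ∑ T ∈ U, ((1 : ℝ) - (-1 : ℝ) ^ ((S ∩ T).card)) =
      if S = A ∨ S = ∅ then 0
      else if S = Finset.univ ∨ S = Finset.univ \ A then 2 * 2 ^ n
      else 2 ^ n := by
  have hn : 2 ≤ n := by omega
  have hkn' : k < n := by omega
  have hA_ne : A ≠ ∅ := by
    rw [hA]
    apply Finset.ne_empty_of_mem (a := (⟨0, by omega⟩ : Fin n))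
    simp only [Finset.mem_filter, Finset.mem_univ, true_and]
    omega
  have hA_ne_univ : A ≠ Finset.univ := by
    rw [hA]; intro h
    have := h.symm ▸ Finset.mem_univ (⟨n - 1, by omega⟩ : Fin n)
    simp only [Finset.mem_filter, Finset.mem_univ, true_and] at this
    omega
  have huniv_ne : (Finset.univ : Finset (Fin n)) ≠ ∅ :=
    Finset.ne_empty_of_mem (Finset.mem_univ (⟨0, by omega⟩ : Fin n))
  have hsd : symmDiff (Finset.univ : Finset (Fin n)) A = Finset.univ \ A := by
    ext i; simp [Finset.mem_symmDiff]
  have hsd_ne : Finset.univ \ A ≠ ∅ := by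
    intro h
    exact hA_ne_univ (subset_antisymm (Finset.subset_univ A)
      (Finset.sdiff_eq_empty_iff_subset.mp h))
  have hA_ne_sd : A ≠ Finset.univ \ A := by
    obtain ⟨i, hi⟩ := Finset.nonempty_iff_ne_empty.mpr hA_ne
    intro h
    have := h ▸ hi
    simp at this
    exact this hi
  have huniv_ne_sd : (Finset.univ : Finset (Fin n)) ≠ Finset.univ \ A := by
    obtain ⟨i, hi⟩ := Finset.nonempty_iff_ne_empty.mpr hA_ne
    intro h
    have := h ▸ Finset.mem_univ i
    simp at this
    exact this hi
  subst hU
  rw [Finset.sum_filter]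
  have key : ∀ T : Finset (Fin n),
      (if Odd T.card ∧ Even ((T ∩ A).card)
        then ((1 : ℝ) - (-1 : ℝ) ^ ((S ∩ T).card)) else 0)
      = ((1 - Fchi Finset.univ T) * (1 + Fchi A T) * (1 - Fchi S T)) / 4 := by
    intro T
    rw [mul_div_assoc, Fchi_indic, Fchi_eq]
    by_cases h : Odd T.card ∧ Even ((T ∩ A).card) <;> simp [h] <;> ring
  have expand : ∀ T : Finset (Fin n),
      (1 - Fchi Finset.univ T) * (1 + Fchi A T) * (1 - Fchi S T)
      = Fchi ∅ T + Fchi A T - Fchi Finset.univ T - Fchi (symmDiff Finset.univ A) T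
        - Fchi S T - Fchi (symmDiff A S) T + Fchi (symmDiff Finset.univ S) T
        + Fchi (symmDiff (symmDiff Finset.univ A) S) T := by
    intro T
    simp only [← Fchi_mul, Fchi_empty]
    ring
  rw [Finset.sum_congr rfl (fun T _ => key T), ← Finset.sum_div]
  rw [Finset.sum_congr rfl (fun T _ => expand T)]
  simp only [Finset.sum_add_distrib, Finset.sum_sub_distrib, Fchi_sum]
  have c1 : (symmDiff A S = ∅) ↔ S = A := by
    rw [← Finset.bot_eq_empty, symmDiff_eq_bot, eq_comm]
  have c2 : (symmDiff (Finset.univ : Finset (Fin n)) S = ∅) ↔ S = Finset.univ := by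
    rw [← Finset.bot_eq_empty, symmDiff_eq_bot, eq_comm]
  have c3 : (symmDiff (symmDiff (Finset.univ : Finset (Fin n)) A) S = ∅)
      ↔ S = Finset.univ \ A := by
    rw [← Finset.bot_eq_empty, symmDiff_eq_bot, hsd, eq_comm]
  rw [if_pos trivial, if_neg hA_ne, if_neg huniv_ne]
  rw [if_neg (by rw [hsd]; exact hsd_ne : ¬(symmDiff (Finset.univ : Finset (Fin n)) A = ∅))]
  simp only [c1, c2, c3]
  split_ifs
  all_goals clear key expand c1 c2 c3 hA
  all_goals try ring
  all_goals exfalso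
  all_goals subst_vars
  all_goals tauto
end

section
/- With k, A, B, U, w_N as above (w_N = 4Σ_{S∈U} s_S, U = {S : |S| odd, |S∩A| even}, A = {1,…,k}), for every i with 1 ≤ i ≤ n−1 and i ≠ k, the minimal eigenvalue of Δ(w_N) acting on V_n^i is at least 2^n. -/
/-!
Write `χ_v(T) = (-1)^|v ∩ T|` for the characters of the group `(Finset α, Δ)` of subsets of
an `n`-element set. The indicator of `U` is `(1 - χ_univ)(1 + χ_A) / 4`, so
`4 Σ_{T ∈ U} (1 - χ_S(T)) = Σ_T (1 - χ_univ)(1 + χ_A)(1 - χ_S)(T)`. Expanding the product by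
`χ_v χ_w = χ_{v Δ w}` and using `Σ_T χ_v(T) = 2^n [v = ∅]`, every term except the constant
and `χ_{univ Δ A Δ S}` vanishes, because `A` and `S` are nonempty, proper and distinct
(they have different sizes). Hence the sum is `2^n` or `2^(n+1)`.
-/

open Finset

namespace Finset

variable {α : Type*} [DecidableEq α]

noncomputable def parityChar (v T : Finset α) : ℝ := (-1) ^ #(v ∩ T)

theorem parityChar_eq_prod (v T : Finset α) :
    parityChar v T = ∏ j ∈ T, if j ∈ v then -1 else 1 := by
  rw [parityChar, prod_ite_mem, prod_const, inter_comm]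

theorem parityChar_symmDiff (v w T : Finset α) :
    parityChar (symmDiff v w) T = parityChar v T * parityChar w T := by
  simp only [parityChar_eq_prod, ← prod_mul_distrib]
  refine prod_congr rfl fun j _ => ?_
  by_cases hv : j ∈ v <;> by_cases hw : j ∈ w <;> simp [hv, hw, mem_symmDiff]

variable [Fintype α]

theorem sum_parityChar (v : Finset α) :
    ∑ T, parityChar v T = if v = ∅ then 2 ^ Fintype.card α else 0 := by
  have hprod : ∑ T, parityChar v T = ∏ j, (1 + if j ∈ v then -1 else 1) := by
    simp only [parityChar_eq_prod, prod_one_add, powerset_univ]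
  rw [hprod]
  split_ifs with hv
  · simp [hv, one_add_one_eq_two]
  · obtain ⟨j, hj⟩ := nonempty_iff_ne_empty.mpr hv
    exact prod_eq_zero (mem_univ j) (by simp [hj])

theorem sum_parityChar_of_ne_empty {v : Finset α} (hv : v ≠ ∅) : ∑ T, parityChar v T = 0 := by
  rw [sum_parityChar, if_neg hv]

theorem sum_parityChar_nonneg (v : Finset α) : 0 ≤ ∑ T, parityChar v T := by
  rw [sum_parityChar]
  split_ifs <;> positivity

theorem four_mul_sum_filter_eq_sum_parityChar (A : Finset α) (f : Finset α → ℝ) :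
    4 * ∑ T ∈ univ.filter (fun T : Finset α => Odd #T ∧ Even #(T ∩ A)), f T =
      ∑ T, (1 - parityChar univ T) * (1 + parityChar A T) * f T := by
  rw [mul_sum, sum_filter]
  refine sum_congr rfl fun T _ => ?_
  simp only [parityChar, univ_inter, inter_comm A T]
  split_ifs with hT
  · rw [hT.1.neg_one_pow, hT.2.neg_one_pow]; ring
  · rcases not_and_or.mp hT with hT | hT
    · rw [(Nat.not_odd_iff_even.mp hT).neg_one_pow]; ring
    · rw [(Nat.not_even_iff_odd.mp hT).neg_one_pow]; ring

theorem two_pow_card_le_four_mul_sum {A S : Finset α} (hA : A ≠ ∅) (hS : S ≠ ∅)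
    (hAu : A ≠ univ) (hSu : S ≠ univ) (hAS : A ≠ S) :
    (2 : ℝ) ^ Fintype.card α ≤
      4 * ∑ T ∈ univ.filter (fun T : Finset α => Odd #T ∧ Even #(T ∩ A)),
        (1 - parityChar S T) := by
  have hu : (univ : Finset α) ≠ ∅ := fun h => hA (subset_empty.mp (h ▸ subset_univ A))
  have hsd : ∀ {v w : Finset α}, v ≠ w → symmDiff v w ≠ ∅ := fun h => h ∘ symmDiff_eq_bot.mp
  have expand : ∀ T, (1 - parityChar univ T) * (1 + parityChar A T) * (1 - parityChar S T) =
      1 - parityChar univ T + parityChar A T - parityChar (symmDiff univ A) T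
        - parityChar S T + parityChar (symmDiff univ S) T - parityChar (symmDiff A S) T
        + parityChar (symmDiff univ (symmDiff A S)) T := fun T => by
    simp only [parityChar_symmDiff]; ring
  rw [four_mul_sum_filter_eq_sum_parityChar A (fun T => 1 - parityChar S T),
    sum_congr rfl fun T _ => expand T]
  simp only [sum_add_distrib, sum_sub_distrib, sum_const, card_univ, Fintype.card_finset,
    nsmul_eq_mul, mul_one, Nat.cast_pow, Nat.cast_ofNat]
  rw [sum_parityChar_of_ne_empty hu, sum_parityChar_of_ne_empty hA,
    sum_parityChar_of_ne_empty (hsd hAu.symm), sum_parityChar_of_ne_empty hS,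
    sum_parityChar_of_ne_empty (hsd hSu.symm), sum_parityChar_of_ne_empty (hsd hAS)]
  linarith [sum_parityChar_nonneg (symmDiff univ (symmDiff A S))]

end Finset

/-- With A = {1,…,k}, U = {S : |S| odd, |S∩A| even}, w_N = 4Σ_{T∈U}s_T, for every
1 ≤ i ≤ n−1 with i ≠ k, the minimal eigenvalue of Δ(w_N) on Vₙⁱ is at least 2ⁿ:
Δ(w_N) acts diagonally with eigenvalue Δ̂(w_N)(S) = 4Σ_{T∈U}(1−(−1)^{|S∩T|}) on the
basis vector S, and each such eigenvalue with |S| = i is ≥ 2ⁿ. -/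
theorem stmt11 (n k : ℕ) (hk1 : 1 ≤ k) (hkn : k ≤ n - 1)
    (A : Finset (Fin n)) (hA : A = Finset.univ.filter (fun i : Fin n => (i : ℕ) < k))
    (U : Finset (Finset (Fin n)))
    (hU : U = Finset.univ.filter (fun S : Finset (Fin n) =>
      Odd S.card ∧ Even ((S ∩ A).card)))
    (i : ℕ) (hi1 : 1 ≤ i) (hin : i ≤ n - 1) (hik : i ≠ k) :
    ∀ S : Finset (Fin n), S.card = i →
      (2 : ℝ) ^ n ≤ 4 * ∑ T ∈ U, ((1 : ℝ) - (-1 : ℝ) ^ ((S ∩ T).card)) := by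
  intro S hS
  have hAcard : #A = k := by rw [hA, Fin.card_filter_val_lt]; omega
  have ne_empty : ∀ {v : Finset (Fin n)}, 1 ≤ #v → v ≠ ∅ := fun h he => by simp [he] at h
  have ne_univ : ∀ {v : Finset (Fin n)}, #v ≤ n - 1 → v ≠ univ := fun h he => by
    simp [he] at h; omega
  have hAS : A ≠ S := fun h => hik (hS ▸ h ▸ hAcard)
  simpa [hU, parityChar] using two_pow_card_le_four_mul_sum (ne_empty (hAcard ▸ hk1)) (ne_empty (hS ▸ hi1))
    (ne_univ (hAcard ▸ hkn)) (ne_univ (hS ▸ hin)) hAS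
end

section
/- With k, A, B, U, w_N as above, let v = Σ_{|S|=k} S ∈ V_n^k. Then Δ(w_N)·v = 2^n·v + 2^n·(B∖A) − 2^n·A if 2k = n, and Δ(w_N)·v = 2^n·v − 2^n·A otherwise. -/
open Finset
open scoped symmDiff

lemma chi_key (n : ℕ) (C : Finset (Fin n)) :
    ∑ T : Finset (Fin n), (-1 : ℝ) ^ ((T ∩ C).card) =
      if C = ∅ then (2 : ℝ) ^ n else 0 := by
  have h1 : ∀ T : Finset (Fin n), (-1 : ℝ) ^ ((T ∩ C).card)
      = (∏ i ∈ T, (if i ∈ C then (-1 : ℝ) else 1)) * ∏ i ∈ univ \ T, (1 : ℝ) := by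
    intro T
    rw [prod_const_one, mul_one, Finset.prod_ite, prod_const, prod_const_one, mul_one,
      Finset.filter_mem_eq_inter]
  calc ∑ T : Finset (Fin n), (-1 : ℝ) ^ ((T ∩ C).card)
      = ∑ T ∈ (univ : Finset (Fin n)).powerset,
          (∏ i ∈ T, (if i ∈ C then (-1 : ℝ) else 1)) * ∏ i ∈ univ \ T, (1 : ℝ) := by
        rw [Finset.powerset_univ]; exact Finset.sum_congr rfl fun T _ => h1 T
    _ = ∏ i : Fin n, ((if i ∈ C then (-1 : ℝ) else 1) + 1) := (Finset.prod_add _ _ _).symm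
    _ = if C = ∅ then (2 : ℝ) ^ n else 0 := by
        by_cases hC : C = ∅
        · simp [hC, Finset.prod_const, Finset.card_univ]
          norm_num
        · rw [if_neg hC]
          obtain ⟨i, hi⟩ := Finset.nonempty_iff_ne_empty.mpr hC
          apply Finset.prod_eq_zero (Finset.mem_univ i)
          simp [hi]

lemma chi_mul (n : ℕ) (T C D : Finset (Fin n)) :
    (-1 : ℝ) ^ ((T ∩ C).card) * (-1 : ℝ) ^ ((T ∩ D).card)
      = (-1 : ℝ) ^ ((T ∩ (C ∆ D)).card) := by
  set X := T ∩ C with hX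
  set Y := T ∩ D with hY
  have hdist : T ∩ (C ∆ D) = X ∆ Y := by
    ext i
    simp only [hX, hY, symmDiff_def, Finset.mem_union, Finset.mem_sdiff, Finset.mem_inter,
      Finset.sup_eq_union, Finset.sdiff_eq_inter_compl]
    simp only [Finset.mem_inter, Finset.mem_union, Finset.mem_compl]
    tauto
  have h3 : X ∪ Y = (X ∆ Y) ∪ (X ∩ Y) := by
    ext i
    simp only [symmDiff_def, Finset.mem_union, Finset.mem_sdiff, Finset.mem_inter,
      Finset.sup_eq_union]
    tauto
  have h4 : Disjoint (X ∆ Y) (X ∩ Y) := by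
    rw [Finset.disjoint_left]
    intro a ha ha'
    simp only [symmDiff_def, Finset.mem_union, Finset.mem_sdiff, Finset.sup_eq_union] at ha
    simp only [Finset.mem_inter] at ha'
    tauto
  have h5 := Finset.card_union_add_card_inter X Y
  rw [h3, Finset.card_union_of_disjoint h4] at h5
  have h6 : X.card + Y.card = (X ∆ Y).card + 2 * (X ∩ Y).card := by omega
  rw [hdist, ← pow_add, h6, pow_add, pow_mul, neg_one_sq, one_pow, mul_one]

/-- With A = {1,…,k}, B = {1,…,n}, U = {S : |S| odd, |S∩A| even}, w_N = 4Σ_{T∈U}s_T and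
v = Σ_{|S|=k} S ∈ Vₙᵏ (the all-ones vector), Δ(w_N)·v = 2ⁿ·v + 2ⁿ·(B∖A) − 2ⁿ·A if 2k = n,
and Δ(w_N)·v = 2ⁿ·v − 2ⁿ·A otherwise; coordinatewise, for each size-k subset S,
(Δ(w_N)v)(S) = 4Σ_{T∈U}(1−(−1)^{|T∩S|}) = 2ⁿ + [2k = n ∧ S = B∖A]·2ⁿ − [S = A]·2ⁿ. -/
theorem stmt12 (n k : ℕ) (hk1 : 1 ≤ k) (hkn : k ≤ n - 1)
    (A : Finset (Fin n)) (hA : A = Finset.univ.filter (fun i : Fin n => (i : ℕ) < k))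
    (U : Finset (Finset (Fin n)))
    (hU : U = Finset.univ.filter (fun S : Finset (Fin n) =>
      Odd S.card ∧ Even ((S ∩ A).card))) :
    ∀ S : {S : Finset (Fin n) // S.card = k},
      4 * ∑ T ∈ U, ((1 : ℝ) - (-1 : ℝ) ^ ((T ∩ S.1).card)) =
        2 ^ n + (if 2 * k = n ∧ S.1 = Finset.univ \ A then (2 : ℝ) ^ n else 0)
          - (if S.1 = A then (2 : ℝ) ^ n else 0) := by
  rintro ⟨S, hScard⟩
  have hn2 : 2 ≤ n := by omega
  have hkln : k < n := by omega
  -- card of A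
  have hAcard : A.card = k := by
    have : A = (Finset.range k).attachFin (fun m hm => lt_of_lt_of_le (mem_range.mp hm) hkln.le) := by
      ext i
      simp [hA, Finset.mem_attachFin, Finset.mem_range]
    rw [this, Finset.card_attachFin, Finset.card_range]
  have hAne : A ≠ ∅ := by
    intro h
    rw [h, Finset.card_empty] at hAcard
    omega
  have hSne : S ≠ ∅ := by
    intro h
    rw [h, Finset.card_empty] at hScard
    omega
  have hAuniv : A ≠ univ := by
    intro h
    rw [h, Finset.card_univ, Fintype.card_fin] at hAcard
    omega
  have hSuniv : S ≠ univ := by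
    intro h
    rw [h, Finset.card_univ, Fintype.card_fin] at hScard
    omega
  have huniv_ne : (univ : Finset (Fin n)) ≠ ∅ := by
    have : (0 : ℕ) < n := by omega
    exact Finset.nonempty_iff_ne_empty.mp ⟨⟨0, this⟩, Finset.mem_univ _⟩
  -- step 1 : pointwise indicator identity
  have step1 : ∀ T : Finset (Fin n),
      (if Odd T.card ∧ Even ((T ∩ A).card) then ((1 : ℝ) - (-1 : ℝ) ^ ((T ∩ S).card)) else 0)
      = (1/4) * ((1 - (-1 : ℝ) ^ ((T ∩ (univ : Finset (Fin n))).card))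
          * (1 + (-1 : ℝ) ^ ((T ∩ A).card)) * (1 - (-1 : ℝ) ^ ((T ∩ S).card))) := by
    intro T
    rw [Finset.inter_univ]
    rcases Nat.even_or_odd T.card with hT | hT
    · rw [if_neg (by simp [Nat.not_odd_iff_even, hT]), hT.neg_one_pow]
      ring
    · rcases Nat.even_or_odd ((T ∩ A).card) with hTA | hTA
      · rw [if_pos ⟨hT, hTA⟩, hT.neg_one_pow, hTA.neg_one_pow]
        ring
      · rw [if_neg (by simp [Nat.not_odd_iff_even, hTA]), hT.neg_one_pow, hTA.neg_one_pow]
        ring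
  -- step 2 : expansion into characters
  have expand : ∀ T : Finset (Fin n),
      (1 - (-1 : ℝ) ^ ((T ∩ (univ : Finset (Fin n))).card))
          * (1 + (-1 : ℝ) ^ ((T ∩ A).card)) * (1 - (-1 : ℝ) ^ ((T ∩ S).card))
      = (-1 : ℝ) ^ ((T ∩ (∅ : Finset (Fin n))).card)
        + (-1 : ℝ) ^ ((T ∩ A).card)
        - (-1 : ℝ) ^ ((T ∩ S).card)
        - (-1 : ℝ) ^ ((T ∩ (A ∆ S)).card)
        - (-1 : ℝ) ^ ((T ∩ (univ : Finset (Fin n))).card)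
        - (-1 : ℝ) ^ ((T ∩ ((univ : Finset (Fin n)) ∆ A)).card)
        + (-1 : ℝ) ^ ((T ∩ ((univ : Finset (Fin n)) ∆ S)).card)
        + (-1 : ℝ) ^ ((T ∩ ((univ : Finset (Fin n)) ∆ (A ∆ S))).card) := by
    intro T
    rw [← chi_mul n T univ (A ∆ S), ← chi_mul n T A S, ← chi_mul n T univ A,
      ← chi_mul n T univ S, Finset.inter_empty, Finset.card_empty, pow_zero]
    ring
  rw [hU, Finset.sum_filter]
  rw [Finset.sum_congr rfl fun T _ => step1 T, ← Finset.mul_sum,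
    Finset.sum_congr rfl fun T _ => expand T]
  simp only [Finset.sum_add_distrib, Finset.sum_sub_distrib]
  rw [chi_key, chi_key, chi_key, chi_key, chi_key, chi_key, chi_key, chi_key]
  -- evaluate the eight indicator conditions
  have e1 : ((∅ : Finset (Fin n)) = ∅) := rfl
  have c4 : (A ∆ S = ∅) ↔ (S = A) := by
    rw [← Finset.bot_eq_empty, symmDiff_eq_bot]; exact eq_comm
  have c6 : ¬ ((univ : Finset (Fin n)) ∆ A = ∅) := by
    rw [← Finset.bot_eq_empty, symmDiff_eq_bot]
    exact fun h => hAuniv h.symm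
  have c7 : ¬ ((univ : Finset (Fin n)) ∆ S = ∅) := by
    rw [← Finset.bot_eq_empty, symmDiff_eq_bot]
    exact fun h => hSuniv h.symm
  have hsdA : (univ \ A).card = n - k := by
    rw [Finset.card_sdiff_of_subset (Finset.subset_univ A), Finset.card_univ, Fintype.card_fin, hAcard]
  have c8 : ((univ : Finset (Fin n)) ∆ (A ∆ S) = ∅) ↔ (2 * k = n ∧ S = univ \ A) := by
    rw [← Finset.bot_eq_empty, symmDiff_eq_bot]
    constructor
    · intro h
      have hS' : S = A ∆ (univ : Finset (Fin n)) := by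
        have := symmDiff_symmDiff_cancel_left A S
        rw [← h] at this
        exact this.symm
      have hAU : A ∆ (univ : Finset (Fin n)) = univ \ A := by
        ext i
        simp only [symmDiff_def, Finset.mem_union, Finset.mem_sdiff, Finset.mem_univ,
          Finset.sup_eq_union]
        tauto
      have hS2 : S = univ \ A := hS'.trans hAU
      refine ⟨?_, hS2⟩
      have := hsdA
      rw [← hS2, hScard] at this
      omega
    · rintro ⟨-, rfl⟩
      ext i
      simp only [symmDiff_def, Finset.mem_union, Finset.mem_sdiff, Finset.mem_univ,
        Finset.sup_eq_union, Finset.mem_inter]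
      tauto
  rw [if_pos e1, if_neg hAne, if_neg hSne, if_neg huniv_ne, if_neg c6, if_neg c7]
  by_cases h4 : S = A
  · have hnot : ¬ (2 * k = n ∧ S = univ \ A) := by
      rintro ⟨-, hS⟩
      have h0 : (0 : ℕ) < n := by omega
      have hiA : (⟨0, h0⟩ : Fin n) ∈ A := by
        rw [hA]; simp only [Finset.mem_filter, Finset.mem_univ, true_and]; omega
      have hiA2 : (⟨0, h0⟩ : Fin n) ∈ univ \ A := by rw [← hS, h4]; exact hiA
      simp only [Finset.mem_sdiff] at hiA2
      exact hiA2.2 hiA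
    rw [if_pos (c4.mpr h4), if_pos h4, if_neg hnot,
      if_neg (fun h => hnot (c8.mp h))]
    ring
  · rw [if_neg (fun h => h4 (c4.mp h)), if_neg h4]
    by_cases h8 : (univ : Finset (Fin n)) ∆ (A ∆ S) = ∅
    · rw [if_pos h8, if_pos (c8.mp h8)]
      ring
    · rw [if_neg h8, if_neg (fun h => h8 (c8.mpr h))]
      ring
end

section
/- With notation as above and w = w_T + w_N where w_T = (2^n/n)·Σ_{1≤i<j≤n}(ij), the vector v = Σ_{|S|=k} S ∈ V_n^k satisfies Δ(w_T)·v = 0 and ⟨Δ(w)v, v⟩ ≤ 2^n·C(n,k), where ⟨·,·⟩ is the inner product making the size-k subsets an orthonormal basis. Consequently the minimal eigenvalue of the symmetric operator Δ(w) on V_n^k is at most 2^n, and strictly less than 2^n since v is not an eigenvector of Δ(w). -/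
/-!
Write `χ_X(T) = (-1)^|T ∩ X|`. The indicator of `U` is `(χ_∅ + χ_A - χ_univ - χ_Aᶜ) / 4`, so the
orthogonality `∑_T χ_X(T) χ_Y(T) = 2ⁿ [X = Y]` evaluates the diagonal operator `Δ(w_N)` on a
`k`-subset `S` as `2ⁿ (1 - [S = A] + [S = Aᶜ])`. The transposition part `Δ(w_T)` kills the all-ones
vector `v`, hence `⟨Δ(w) v, v⟩ ≤ 2ⁿ ‖v‖²`, while `Δ(w) v` vanishes at `A` and so differs from `2ⁿ v`.
Since a positive semidefinite `B` with `⟨B v, v⟩ ≤ 0` has `B v = 0`, the symmetric matrix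
`Δ(w) - 2ⁿ` is not positive semidefinite, i.e. `Δ(w)` has an eigenvalue below `2ⁿ`.
-/

open Finset Matrix
open scoped symmDiff

section Characters

variable {α R : Type*} [DecidableEq α] [CommRing R]

theorem neg_one_pow_card_inter_eq_prod (T X : Finset α) :
    (-1 : R) ^ #(T ∩ X) = ∏ i ∈ T, if i ∈ X then -1 else 1 := by
  rw [prod_ite, prod_const_one, mul_one, prod_const, filter_mem_eq_inter]

theorem neg_one_pow_card_inter_mul (T X Y : Finset α) :
    (-1 : R) ^ #(T ∩ X) * (-1) ^ #(T ∩ Y) = (-1) ^ #(T ∩ (X ∆ Y)) := by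
  simp only [neg_one_pow_card_inter_eq_prod, ← prod_mul_distrib, mem_symmDiff]
  refine prod_congr rfl fun i _ => ?_
  by_cases hX : i ∈ X <;> by_cases hY : i ∈ Y <;> simp [hX, hY]

variable [Fintype α]

theorem sum_neg_one_pow_card_inter (X : Finset α) :
    ∑ T, (-1 : R) ^ #(T ∩ X) = if X = ∅ then 2 ^ Fintype.card α else 0 := by
  simp only [neg_one_pow_card_inter_eq_prod, ← powerset_univ, ← prod_one_add]
  split_ifs with hX
  · simp [hX, one_add_one_eq_two]
  · obtain ⟨a, ha⟩ := nonempty_iff_ne_empty.2 hX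
    exact prod_eq_zero (mem_univ a) (by simp [ha])

theorem sum_neg_one_pow_card_inter_mul (X Y : Finset α) :
    ∑ T, (-1 : R) ^ #(T ∩ X) * (-1) ^ #(T ∩ Y) = if X = Y then 2 ^ Fintype.card α else 0 := by
  simp only [neg_one_pow_card_inter_mul, sum_neg_one_pow_card_inter, ← bot_eq_empty,
    symmDiff_eq_bot]

theorem ite_odd_card_and_even_card_inter (T A : Finset α) :
    (if Odd #T ∧ Even #(T ∩ A) then 4 else 0 : R) =
      (-1) ^ #(T ∩ ∅) + (-1) ^ #(T ∩ A) - (-1) ^ #(T ∩ univ) - (-1) ^ #(T ∩ Aᶜ) := by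
  have hc : (-1 : R) ^ #(T ∩ Aᶜ) = (-1) ^ #(T ∩ univ) * (-1) ^ #(T ∩ A) := by
    rw [neg_one_pow_card_inter_mul, ← top_eq_univ, top_symmDiff, hnot_eq_compl]
  rw [hc, inter_empty, inter_univ]
  rcases Nat.even_or_odd #T with hT | hT <;> rcases Nat.even_or_odd #(T ∩ A) with hTA | hTA <;>
    norm_num [hT.neg_one_pow, hTA.neg_one_pow, hT, hTA, Nat.not_odd_iff_even, Nat.not_even_iff_odd]

theorem sum_filter_odd_card_and_even_card_inter (A S : Finset α) :
    ∑ T with Odd #T ∧ Even #(T ∩ A), (-1 : ℝ) ^ #(T ∩ S) =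
      2 ^ Fintype.card α / 4 * ((if ∅ = S then 1 else 0) + (if A = S then 1 else 0)
        - (if univ = S then 1 else 0) - (if Aᶜ = S then 1 else 0)) := by
  have h4 : ∀ T : Finset α, (if Odd #T ∧ Even #(T ∩ A) then (-1 : ℝ) ^ #(T ∩ S) else 0) =
      ((-1) ^ #(T ∩ ∅) * (-1) ^ #(T ∩ S) + (-1) ^ #(T ∩ A) * (-1) ^ #(T ∩ S)
        - (-1) ^ #(T ∩ univ) * (-1) ^ #(T ∩ S) - (-1) ^ #(T ∩ Aᶜ) * (-1) ^ #(T ∩ S)) / 4 := by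
    intro T
    rw [← add_mul, ← sub_mul, ← sub_mul, ← ite_odd_card_and_even_card_inter, ite_mul, zero_mul]
    split_ifs <;> ring
  simp only [sum_filter, h4, ← sum_div, sum_sub_distrib, sum_add_distrib,
    sum_neg_one_pow_card_inter_mul]
  split_ifs <;> ring

theorem four_mul_sum_filter_odd_card_and_even_card_inter_one_sub {A S : Finset α}
    (hA : A ≠ ∅) (hAu : A ≠ univ) (hS : S ≠ ∅) (hSu : S ≠ univ) :
    4 * ∑ T with Odd #T ∧ Even #(T ∩ A), (1 - (-1 : ℝ) ^ #(T ∩ S)) =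
      2 ^ Fintype.card α * (1 - (if A = S then 1 else 0) + (if Aᶜ = S then 1 else 0)) := by
  have hAc : Aᶜ ≠ ∅ := by rwa [Ne, compl_eq_empty_iff]
  have hu : (univ : Finset α) ≠ ∅ := fun h => hA (subset_empty.1 (h ▸ subset_univ A))
  have hone : ∑ T with Odd #T ∧ Even #(T ∩ A), (1 : ℝ) =
      ∑ T with Odd #T ∧ Even #(T ∩ A), (-1 : ℝ) ^ #(T ∩ ∅) := by simp
  rw [sum_sub_distrib, hone, sum_filter_odd_card_and_even_card_inter,
    sum_filter_odd_card_and_even_card_inter]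
  simp only [if_true, if_neg hA, if_neg hu, if_neg hAc, if_neg hS.symm, if_neg hSu.symm]
  ring

theorem sum_one_sub_ite_add_ite_compl_le {k : ℕ} {A : Finset α} (hA : #A = k) :
    ∑ S : {S : Finset α // #S = k},
        (1 - (if A = S.1 then 1 else 0) + (if Aᶜ = S.1 then 1 else 0) : ℝ) ≤
      (Fintype.card α).choose k := by
  rw [← sum_subtype (powersetCard k univ) (fun S => mem_powersetCard_univ)
    (fun S => 1 - (if A = S then 1 else 0) + (if Aᶜ = S then (1 : ℝ) else 0))]
  simp only [sum_add_distrib, sum_sub_distrib, sum_ite_eq, mem_powersetCard_univ, hA, sum_const,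
    card_powersetCard, card_univ]
  split_ifs <;> simp

end Characters

theorem Matrix.IsHermitian.exists_mulVec_eq_smul_lt_of_dotProduct_le {ι : Type*} [Fintype ι]
    [DecidableEq ι] {M : Matrix ι ι ℝ} (hM : M.IsHermitian) {v : ι → ℝ} {R : ℝ}
    (hv : v ⬝ᵥ M *ᵥ v ≤ R * (v ⬝ᵥ v)) (hMv : M *ᵥ v ≠ R • v) :
    ∃ (μ : ℝ) (f : ι → ℝ), f ≠ 0 ∧ M *ᵥ f = μ • f ∧ μ < R := by
  set B := M - R • (1 : Matrix ι ι ℝ) with hBdef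
  have hBv : ∀ f, B *ᵥ f = M *ᵥ f - R • f := fun f => by
    rw [hBdef, sub_mulVec, smul_mulVec, one_mulVec]
  have hB : B.IsHermitian := hM.sub (isHermitian_one.smul (IsSelfAdjoint.all R))
  by_contra! h
  have hpsd : B.PosSemidef := hB.posSemidef_iff_eigenvalues_nonneg.2 fun i => by
    have hne : ⇑(hB.eigenvectorBasis i) ≠ 0 := fun h0 => by
      simpa [(WithLp.ofLp_eq_zero 2).1 h0] using hB.eigenvectorBasis.orthonormal.1 i
    have := h (hB.eigenvalues i + R) _ hne (by
      rw [add_smul, ← sub_eq_iff_eq_add, ← hBv, hB.mulVec_eigenvectorBasis])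
    simp only [Pi.zero_apply]
    linarith
  have hzero : star v ⬝ᵥ B *ᵥ v = 0 := by
    refine le_antisymm ?_ (hpsd.dotProduct_mulVec_nonneg v)
    simpa [hBv, dotProduct_sub, dotProduct_smul] using hv
  apply hMv
  rw [← sub_eq_zero, ← hBv]
  exact (hpsd.dotProduct_mulVec_zero_iff v).1 hzero

section LaplacianAddDiagonal

variable {ι γ : Type*} [Fintype ι] [DecidableEq ι]

def laplacianAddDiagonal (c : ℝ) (P : Finset γ) (σ : γ → ι → ι) (d : ι → ℝ) :
    Matrix ι ι ℝ :=
  c • ∑ p ∈ P, (1 - (1 : Matrix ι ι ℝ).submatrix (σ p) id) + diagonal d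

theorem laplacianAddDiagonal_mulVec (c : ℝ) (P : Finset γ) (σ : γ → ι → ι) (d : ι → ℝ)
    (f : ι → ℝ) (i : ι) :
    (laplacianAddDiagonal c P σ d *ᵥ f) i = c * ∑ p ∈ P, (f i - f (σ p i)) + d i * f i := by
  have hperm : ∀ p, ((1 : Matrix ι ι ℝ).submatrix (σ p) id *ᵥ f) i = f (σ p i) := fun p => by
    simp [mulVec, dotProduct, one_apply]
  simp [laplacianAddDiagonal, add_mulVec, smul_mulVec, sum_mulVec, sub_mulVec, mulVec_diagonal,
    hperm]

theorem laplacianAddDiagonal_mulVec_one (c : ℝ) (P : Finset γ) (σ : γ → ι → ι) (d : ι → ℝ) :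
    laplacianAddDiagonal c P σ d *ᵥ (fun _ => 1) = d :=
  funext fun i => by simp [laplacianAddDiagonal_mulVec]

theorem isHermitian_laplacianAddDiagonal (c : ℝ) (P : Finset γ) {σ : γ → ι → ι}
    (hσ : ∀ p, Function.Involutive (σ p)) (d : ι → ℝ) :
    (laplacianAddDiagonal c P σ d).IsHermitian := by
  have hperm : ∀ p, ((1 : Matrix ι ι ℝ).submatrix (σ p) id)ᵀ =
      (1 : Matrix ι ι ℝ).submatrix (σ p) id := fun p => by
    ext i j
    simp only [transpose_apply, submatrix_apply, id_eq, one_apply]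
    exact if_congr ⟨fun h => h ▸ hσ p j, fun h => h ▸ hσ p i⟩ rfl rfl
  rw [isHermitian_iff_isSymm]
  simp [IsSymm, laplacianAddDiagonal, transpose_sum, hperm]

theorem exists_laplacianAddDiagonal_mulVec_eq_smul_lt (c : ℝ) (P : Finset γ) {σ : γ → ι → ι}
    (hσ : ∀ p, Function.Involutive (σ p)) {d : ι → ℝ} {R : ℝ}
    (hd : ∑ i, d i ≤ R * Fintype.card ι) (i₀ : ι) (hi₀ : d i₀ ≠ R) :
    ∃ (μ : ℝ) (f : ι → ℝ), f ≠ 0 ∧ laplacianAddDiagonal c P σ d *ᵥ f = μ • f ∧ μ < R := by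
  refine (isHermitian_laplacianAddDiagonal c P hσ d).exists_mulVec_eq_smul_lt_of_dotProduct_le
    (v := fun _ => 1) ?_ fun h => hi₀ ?_
  · simpa [laplacianAddDiagonal_mulVec_one, dotProduct] using hd
  · simpa [laplacianAddDiagonal_mulVec_one] using congrFun h i₀

end LaplacianAddDiagonal

/-- With w = w_T + w_N, w_T = (2ⁿ/n)Σ_{i<j}(ij), w_N = 4Σ_{T∈U}s_T, and v = Σ_{|S|=k}S
(the all-ones vector of Vₙᵏ): Δ(w_T)v = 0; ⟨Δ(w)v, v⟩ ≤ 2ⁿ·C(n,k) for the inner product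
making the size-k subsets orthonormal; and the minimal eigenvalue of the symmetric
operator Δ(w) on Vₙᵏ is strictly less than 2ⁿ. -/
theorem stmt13 (n k : ℕ) (hk1 : 1 ≤ k) (hkn : k ≤ n - 1)
    (A : Finset (Fin n)) (hA : A = Finset.univ.filter (fun i : Fin n => (i : ℕ) < k))
    (U : Finset (Finset (Fin n)))
    (hU : U = Finset.univ.filter (fun S : Finset (Fin n) =>
      Odd S.card ∧ Even ((S ∩ A).card)))
    (perm : Equiv.Perm (Fin n) →
      {S : Finset (Fin n) // S.card = k} → {S : Finset (Fin n) // S.card = k})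
    (hperm : ∀ π S, (perm π S : Finset (Fin n)) = (S : Finset (Fin n)).image π)
    (Δ : ({S : Finset (Fin n) // S.card = k} → ℝ) →
      ({S : Finset (Fin n) // S.card = k} → ℝ))
    (hΔ : ∀ f S, Δ f S =
      ((2 : ℝ) ^ n / n) * ∑ p ∈ Finset.univ.filter (fun p : Fin n × Fin n => p.1 < p.2),
          (f S - f (perm (Equiv.swap p.1 p.2) S))
        + 4 * ∑ T ∈ U, (f S - (-1 : ℝ) ^ ((T ∩ S.1).card) * f S))
    (v : {S : Finset (Fin n) // S.card = k} → ℝ) (hv : v = fun _ => 1) :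
    (∀ S, ((2 : ℝ) ^ n / n) *
        ∑ p ∈ Finset.univ.filter (fun p : Fin n × Fin n => p.1 < p.2),
          (v S - v (perm (Equiv.swap p.1 p.2) S)) = 0) ∧
    (∑ S : {S : Finset (Fin n) // S.card = k}, Δ v S * v S ≤ 2 ^ n * (n.choose k)) ∧
    (∃ (μ : ℝ) (f : {S : Finset (Fin n) // S.card = k} → ℝ),
      f ≠ 0 ∧ Δ f = μ • f ∧ μ < 2 ^ n) := by
  have hAk : #A = k := by rw [hA, Fin.card_filter_val_lt]; omega
  have hproper : ∀ S : Finset (Fin n), #S = k → S ≠ ∅ ∧ S ≠ univ := fun S hS =>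
    ⟨fun h => by simp [h] at hS; omega, fun h => by simp [h] at hS; omega⟩
  set d : {S : Finset (Fin n) // S.card = k} → ℝ := fun S => 4 * ∑ T ∈ U, (1 - (-1) ^ #(T ∩ S.1))
  have hd : ∀ S, d S = 2 ^ n * (1 - (if A = S.1 then 1 else 0) + (if Aᶜ = S.1 then 1 else 0)) :=
    fun S => by
      simp only [d, hU]
      simpa only [Fintype.card_fin] using four_mul_sum_filter_odd_card_and_even_card_inter_one_sub
        (hproper A hAk).1 (hproper A hAk).2 (hproper S S.2).1 (hproper S S.2).2
  have hΔM : Δ = (laplacianAddDiagonal ((2 : ℝ) ^ n / n) {p : Fin n × Fin n | p.1 < p.2}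
      (fun p => perm (Equiv.swap p.1 p.2)) d *ᵥ ·) := funext fun f => funext fun S => by
    rw [hΔ, laplacianAddDiagonal_mulVec, mul_assoc, sum_mul]
    congr 2
    exact sum_congr rfl fun T _ => by ring
  have hsum : ∑ S, d S ≤ 2 ^ n * n.choose k := by
    simp only [hd, ← mul_sum]
    gcongr
    simpa using sum_one_sub_ite_add_ite_compl_le hAk
  have hdA : d ⟨A, hAk⟩ ≠ 2 ^ n := by
    have hAc : Aᶜ ≠ A := fun h => (hproper A hAk).1 (by simpa [h] using inter_compl A)
    simp [hd, hAc, eq_comm (a := (0 : ℝ))]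
  have hσ : ∀ p : Fin n × Fin n, Function.Involutive (perm (Equiv.swap p.1 p.2)) :=
    fun p S => Subtype.ext (by simp [hperm, image_image, Function.comp_def])
  subst hv
  refine ⟨fun S => by simp, by simpa [hΔM, laplacianAddDiagonal_mulVec_one] using hsum, ?_⟩
  rw [hΔM]
  exact exists_laplacianAddDiagonal_mulVec_eq_smul_lt _ _ hσ
    (by simpa [Fintype.card_finset_len, mul_comm] using hsum) _ hdA
end
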